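/- Selection strategy theorem: if a selection function tree εt : 𝒥 Xt attains a quantifier tree φt : 𝒦 Xt then, for any outcome function q : Path Xt → R, the strategy strategy(εt, q) is optimal for the game (Xt, R, q, φt). -/
import Mathlib


/-- Dependent type trees: the empty tree and `X :: Xf` for a type `X` and a forest `Xf`. -/
inductive GTree : Type 1 where
  | nil : GTree
  | cons : (X : Type) → (X → GTree) → GTree

/-- Paths in a dependent type tree. -/
def GTree.Path : GTree → Type
  | .nil => PUnit
  | .cons X Xf => (x : X) × (Xf x).Path

/-- `S`-structured trees over a type tree. -/
def GTree.Str (S : Type → Type) : GTree → Type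
  | .nil => PUnit
  | .cons X Xf => S X × ((x : X) → (Xf x).Str S)

/-- Quantifiers with outcome type `R`. -/
def K (R X : Type) : Type := (X → R) → R

/-- Selection functions with outcome type `R`. -/
def J (R X : Type) : Type := (X → R) → X

/-- A selection function tree attains a quantifier tree. -/
def AttainsTree {R : Type} : (t : GTree) → t.Str (J R) → t.Str (K R) → Prop
  | .nil, _, _ => True
  | .cons _ Xf, εt, φt =>
      (∀ p, p (εt.1 p) = φt.1 p) ∧ ∀ x, AttainsTree (Xf x) (εt.2 x) (φt.2 x)

/-- Binary dependent product of selection functions. -/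
def prodJ {R X : Type} {Y : X → Type} (ε : J R X) (δ : (x : X) → J R (Y x)) :
    J R ((x : X) × Y x) :=
  fun q =>
    let ν : (x : X) → Y x := fun x => δ x (fun y => q ⟨x, y⟩)
    let x₀ : X := ε (fun x => q ⟨x, ν x⟩)
    ⟨x₀, ν x₀⟩

/-- Iterated product of a selection function tree. -/
def Jsequence {R : Type} : (t : GTree) → t.Str (J R) → J R t.Path
  | .nil, _ => fun _ => ⟨⟩
  | .cons _ Xf, εt => prodJ εt.1 (fun x => Jsequence (Xf x) (εt.2 x))

/-- Strategies over a type tree. -/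
def GTree.Strategy (t : GTree) : Type := t.Str (fun X => X)

/-- The strategic path of a strategy. -/
def spath : (t : GTree) → t.Strategy → t.Path
  | .nil, _ => ⟨⟩
  | .cons _ Xf, σ => ⟨σ.1, spath (Xf σ.1) (σ.2 σ.1)⟩

/-- The strategy induced by a selection function tree and an outcome function. -/
def strategyOf {R : Type} : (t : GTree) → t.Str (J R) → (t.Path → R) → t.Strategy
  | .nil, _, _ => ⟨⟩
  | .cons X Xf, εt, q =>
      ⟨(Jsequence (.cons X Xf) εt q).1,
       fun x => strategyOf (Xf x) (εt.2 x) (fun y => q ⟨x, y⟩)⟩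

/-- Optimality of a strategy for the game `(t, R, q, φt)`. -/
def Optimal {R : Type} : (t : GTree) → (t.Path → R) → t.Str (K R) → t.Strategy → Prop
  | .nil, _, _, _ => True
  | .cons _ Xf, q, φt, σ =>
      (q ⟨σ.1, spath (Xf σ.1) (σ.2 σ.1)⟩ = φt.1 (fun x => q ⟨x, spath (Xf x) (σ.2 x)⟩)) ∧
      ∀ x, Optimal (Xf x) (fun y => q ⟨x, y⟩) (φt.2 x) (σ.2 x)

lemma spath_strategyOf {R : Type} : ∀ (t : GTree) (εt : t.Str (J R)) (q : t.Path → R),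
    spath t (strategyOf t εt q) = Jsequence t εt q
  | .nil, _, _ => rfl
  | .cons X Xf, εt, q => by
    show (⟨_, _⟩ : (x : X) × (Xf x).Path) = _
    simp only [strategyOf, spath]
    have ih : ∀ x, spath (Xf x) (strategyOf (Xf x) (εt.2 x) (fun y => q ⟨x, y⟩))
        = Jsequence (Xf x) (εt.2 x) (fun y => q ⟨x, y⟩) :=
      fun x => spath_strategyOf (Xf x) (εt.2 x) _
    simp only [ih]
    rfl

/-- Selection strategy theorem: if `εt` attains `φt`, then `strategyOf εt q` is
optimal for the game `(t, R, q, φt)`. -/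
theorem selection_strategy_theorem {R : Type} (t : GTree)
    (εt : t.Str (J R)) (φt : t.Str (K R)) (h : AttainsTree t εt φt)
    (q : t.Path → R) :
    Optimal t q φt (strategyOf t εt q) := by
  induction t with
  | nil => trivial
  | cons X Xf ih =>
    obtain ⟨h1, h2⟩ := h
    refine ⟨?_, fun x => ih x (εt.2 x) (φt.2 x) (h2 x) _⟩
    simp only [strategyOf, spath_strategyOf]
    exact h1 (fun x => q ⟨x, Jsequence (Xf x) (εt.2 x) fun y => q ⟨x, y⟩⟩)
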